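/- Let \rho be a C^{\nu+2} real-valued function on an open convex set \Omega \subset \mathbb{C}^N \cong \mathbb{R}^{2N}, and let v_\nu(\zeta,z) = -\sum_{|\alpha| \le \nu} \frac{1}{\alpha!}\frac{\partial^\alpha\rho}{\partial\zeta^\alpha}(\zeta)(z-\zeta)^\alpha be the truncated holomorphic Taylor series in the Wirtinger derivatives. Then for each j, the function (\zeta,z) \mapsto \frac{\partial v_\nu}{\partial \zeta_j}(\zeta,z) (Wirtinger derivative in \zeta) satisfies \frac{\partial v_\nu}{\partial\zeta_j}(\zeta,z) = O(|\zeta - z|^\nu) locally uniformly on \Omega \times \Omega. -/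

import Mathlib

/-!
Differentiating `v_ν` in `ζ_j` telescopes. Since `∂/∂ζ_j (z - ζ)^(β + e_j) = -(β_j + 1) (z - ζ)^β`
and Wirtinger derivatives commute on `C²` functions, the term of `∂v_ν/∂ζ_j` coming from the
coefficient of `(z - ζ)^β` cancels the one coming from the monomial `(z - ζ)^(β + e_j)` whenever
`|β| < ν`. What survives is `-∑_{|β| = ν} ∂^(β + e_j)ρ(ζ) (z - ζ)^β / β!`, whose coefficients are
continuous, hence bounded on compact sets, while `|(z - ζ)^β| ≤ |ζ - z|^ν`.
-/

open Complex

noncomputable section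

/-- Holomorphic Wirtinger derivative `∂f/∂ζ_j = ½(∂f/∂x_j - i ∂f/∂y_j)`. -/
def Wd {N : ℕ} (j : Fin N) (f : EuclideanSpace ℂ (Fin N) → ℂ)
    (ζ : EuclideanSpace ℂ (Fin N)) : ℂ :=
  (1 / 2 : ℂ) * (fderiv ℝ f ζ (EuclideanSpace.single j 1)
    - Complex.I * fderiv ℝ f ζ (EuclideanSpace.single j Complex.I))

/-- Iterated holomorphic Wirtinger derivative along a list of directions. -/
def WdList {N : ℕ} (l : List (Fin N)) (f : EuclideanSpace ℂ (Fin N) → ℂ) :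
    EuclideanSpace ℂ (Fin N) → ℂ :=
  l.foldr (fun j g => Wd j g) f

/-- The multi-index Wirtinger derivative `∂^α/∂ζ^α`. -/
def WdPow {N : ℕ} (α : Fin N → ℕ) (f : EuclideanSpace ℂ (Fin N) → ℂ) :
    EuclideanSpace ℂ (Fin N) → ℂ :=
  WdList ((List.finRange N).flatMap fun j => List.replicate (α j) j) f

/-- The truncated holomorphic Taylor polynomial
`v_ν(ζ,z) = -∑_{|α| ≤ ν} (1/α!) ∂^αρ/∂ζ^α(ζ) (z-ζ)^α`. -/
def truncTaylor {N : ℕ} (ν : ℕ) (ρ : EuclideanSpace ℂ (Fin N) → ℝ)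
    (ζ z : EuclideanSpace ℂ (Fin N)) : ℂ :=
  -∑ α ∈ (Finset.univ : Finset (Fin N → Fin (ν + 1))).filter
      (fun α => ∑ j, (α j : ℕ) ≤ ν),
    (1 / (∏ j, ((α j : ℕ).factorial : ℂ))) *
      WdPow (fun j => (α j : ℕ)) (fun x => (ρ x : ℂ)) ζ *
      ∏ j, (z j - ζ j) ^ (α j : ℕ)


open Topology

variable {N : ℕ}

local notation:max "ℂ^" n:max => EuclideanSpace ℂ (Fin n)

section Calculus

variable {j : Fin N} {f g : ℂ^N → ℂ} {ζ : ℂ^N}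

theorem wd_congr (j : Fin N) (h : f =ᶠ[𝓝 ζ] g) : Wd j f ζ = Wd j g ζ := by
  simp only [Wd, h.fderiv_eq]

theorem wd_const (j : Fin N) (c : ℂ) (ζ : ℂ^N) : Wd j (fun _ => c) ζ = 0 := by
  simp [Wd]

theorem wd_neg : Wd j (fun w => -f w) ζ = -Wd j f ζ := by
  simp only [Wd, fderiv_fun_neg, neg_apply]
  ring

theorem wd_mul (hf : DifferentiableAt ℝ f ζ) (hg : DifferentiableAt ℝ g ζ) :
    Wd j (fun w => f w * g w) ζ = Wd j f ζ * g ζ + f ζ * Wd j g ζ := by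
  simp only [Wd, fderiv_fun_mul hf hg, add_apply, smul_apply, smul_eq_mul]
  ring

theorem wd_const_mul (c : ℂ) (hf : DifferentiableAt ℝ f ζ) :
    Wd j (fun w => c * f w) ζ = c * Wd j f ζ := by
  rw [wd_mul (differentiableAt_const c) hf, wd_const, zero_mul, zero_add]

theorem wd_pow (m : ℕ) (hf : DifferentiableAt ℝ f ζ) :
    Wd j (fun w => f w ^ m) ζ = m * f ζ ^ (m - 1) * Wd j f ζ := by
  simp only [Wd, fderiv_fun_pow m hf, smul_apply, smul_eq_mul, nsmul_eq_mul]
  ring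

theorem wd_sum {ι : Type*} (s : Finset ι) {f : ι → ℂ^N → ℂ}
    (hf : ∀ i ∈ s, DifferentiableAt ℝ (f i) ζ) :
    Wd j (fun w => ∑ i ∈ s, f i w) ζ = ∑ i ∈ s, Wd j (f i) ζ := by
  simp only [Wd, fderiv_fun_sum hf, sum_apply, Finset.mul_sum, ← Finset.sum_sub_distrib]

theorem wd_prod {ι : Type*} [DecidableEq ι] (s : Finset ι) {f : ι → ℂ^N → ℂ}
    (hf : ∀ i ∈ s, DifferentiableAt ℝ (f i) ζ) :
    Wd j (fun w => ∏ i ∈ s, f i w) ζ = ∑ i ∈ s, Wd j (f i) ζ * ∏ l ∈ s.erase i, f l ζ := by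
  simp only [Wd, fderiv_finsetProd hf, sum_apply, smul_apply, smul_eq_mul, Finset.mul_sum,
    ← Finset.sum_sub_distrib]
  exact Finset.sum_congr rfl fun _ _ => by ring

theorem wd_const_sub_apply (j k : Fin N) (z ζ : ℂ^N) :
    Wd j (fun w => z k - w k) ζ = if k = j then -1 else 0 := by
  have hproj : ∀ v : ℂ^N, fderiv ℝ (fun w : ℂ^N => w k) ζ v = v k := fun v =>
    congrArg (· v) ((EuclideanSpace.proj k : ℂ^N →L[ℂ] ℂ).restrictScalars ℝ).fderiv
  simp only [Wd, fderiv_const_sub, neg_apply, hproj]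
  by_cases hk : k = j
  · simp [hk, mul_neg, ← sq]
    ring
  · simp [hk]

end Calculus

section Monomial

def taylorMonomial (z : ℂ^N) (γ : Fin N → ℕ) (w : ℂ^N) : ℂ :=
  ∏ k, (z k - w k) ^ γ k

variable (z : ℂ^N) (γ : Fin N → ℕ) (ζ : ℂ^N)

theorem differentiableAt_taylorMonomial : DifferentiableAt ℝ (taylorMonomial z γ) ζ := by
  unfold taylorMonomial
  fun_prop

-- `γ - Pi.single j 1` truncates at `γ j = 0`, where the factor `γ j` kills the term anyway.
theorem wd_taylorMonomial (j : Fin N) :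
    Wd j (taylorMonomial z γ) ζ = -γ j * taylorMonomial z (γ - Pi.single j 1) ζ := by
  have hcoord : ∀ k, DifferentiableAt ℝ (fun w : ℂ^N => z k - w k) ζ := fun k => by fun_prop
  have hsplit : taylorMonomial z (γ - Pi.single j 1) ζ
      = (z j - ζ j) ^ (γ j - 1) * ∏ k ∈ Finset.univ.erase j, (z k - ζ k) ^ γ k := by
    rw [taylorMonomial, ← Finset.mul_prod_erase _ _ (Finset.mem_univ j)]
    congr 1
    · simp
    · exact Finset.prod_congr rfl fun k hk => by simp [Finset.ne_of_mem_erase hk]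
  rw [hsplit]
  unfold taylorMonomial
  rw [wd_prod (f := fun k w => (z k - w k) ^ γ k) _ fun k _ => (hcoord k).pow (γ k),
    Finset.sum_eq_single j]
  · rw [wd_pow _ (hcoord j), wd_const_sub_apply, if_pos rfl]
    ring
  · intro k _ hkj
    rw [wd_pow _ (hcoord k), wd_const_sub_apply, if_neg hkj, mul_zero, zero_mul]
  · simp

theorem norm_taylorMonomial_le : ‖taylorMonomial z γ ζ‖ ≤ ‖ζ - z‖ ^ ∑ k, γ k := by
  rw [taylorMonomial, norm_prod, ← Finset.prod_pow_eq_pow_sum]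
  refine Finset.prod_le_prod (fun _ _ => by positivity) fun k _ => ?_
  rw [norm_pow, norm_sub_rev]
  exact pow_le_pow_left₀ (norm_nonneg _) (PiLp.norm_apply_le (ζ - z) k) _

end Monomial

section Commute

def wirtingerCLM (j : Fin N) : (ℂ^N →L[ℝ] ℂ) →L[ℝ] ℂ :=
  (1 / 2 : ℂ) • (ContinuousLinearMap.apply ℝ ℂ (EuclideanSpace.single j 1)
    - I • ContinuousLinearMap.apply ℝ ℂ (EuclideanSpace.single j I))

theorem wirtingerCLM_apply (j : Fin N) (L : ℂ^N →L[ℝ] ℂ) :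
    wirtingerCLM j L = (1 / 2 : ℂ) * (L (EuclideanSpace.single j 1)
      - I * L (EuclideanSpace.single j I)) := by
  simp [wirtingerCLM]

variable {f : ℂ^N → ℂ} {ζ : ℂ^N}

theorem wd_eq_comp (j : Fin N) (f : ℂ^N → ℂ) : Wd j f = wirtingerCLM j ∘ fderiv ℝ f := by
  ext y
  rw [Function.comp_apply, wirtingerCLM_apply, Wd]

theorem contDiffOn_wd {Ω : Set ℂ^N} (hΩ : IsOpen Ω) (j : Fin N) {m : ℕ}
    (hf : ContDiffOn ℝ (m + 1 : ℕ) f Ω) : ContDiffOn ℝ m (Wd j f) Ω := by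
  rw [wd_eq_comp]
  exact (wirtingerCLM j).contDiff.comp_contDiffOn (hf.fderiv_of_isOpen hΩ (by simp))

theorem wd_comm (hf : ContDiffAt ℝ 2 f ζ) (a b : Fin N) :
    Wd a (Wd b f) ζ = Wd b (Wd a f) ζ := by
  have hf' : DifferentiableAt ℝ (fderiv ℝ f) ζ :=
    (hf.fderiv_right (m := 1) le_rfl).differentiableAt one_ne_zero
  have hsymm := hf.isSymmSndFDerivAt (by simp)
  have hfderiv : ∀ b v, fderiv ℝ (Wd b f) ζ v = wirtingerCLM b (fderiv ℝ (fderiv ℝ f) ζ v) :=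
    fun b v => by rw [wd_eq_comp, ((wirtingerCLM b).hasFDerivAt.comp ζ hf'.hasFDerivAt).fderiv]; rfl
  simp only [Wd, hfderiv, wirtingerCLM_apply]
  rw [hsymm (EuclideanSpace.single b 1) (EuclideanSpace.single a 1),
    hsymm (EuclideanSpace.single b 1) (EuclideanSpace.single a I),
    hsymm (EuclideanSpace.single b I) (EuclideanSpace.single a 1),
    hsymm (EuclideanSpace.single b I) (EuclideanSpace.single a I)]
  ring

end Commute

section Iterated

variable {f : ℂ^N → ℂ} {Ω : Set ℂ^N}

theorem contDiffOn_wdList (hΩ : IsOpen Ω) (l : List (Fin N)) {m : ℕ}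
    (hf : ContDiffOn ℝ (m + l.length : ℕ) f Ω) : ContDiffOn ℝ m (WdList l f) Ω := by
  induction l generalizing m with
  | nil => simpa [WdList] using hf
  | cons j l ih => exact contDiffOn_wd hΩ j (ih (by simpa [add_assoc, add_comm 1] using hf))

theorem wdList_perm (hΩ : IsOpen Ω) {n : ℕ} (hf : ContDiffOn ℝ n f Ω) {l l' : List (Fin N)}
    (hp : l.Perm l') (hlen : l.length ≤ n) : Set.EqOn (WdList l f) (WdList l' f) Ω := by
  induction hp with
  | nil => exact Set.eqOn_refl _ _
  | cons j _ ih =>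
    intro ζ hζ
    exact wd_congr j ((ih (by simp at hlen; omega)).eventuallyEq_of_mem (hΩ.mem_nhds hζ))
  | swap a b l =>
    intro ζ hζ
    have h2 : ContDiffOn ℝ (2 : ℕ) (WdList l f) Ω :=
      contDiffOn_wdList hΩ l (hf.of_le (by simp at hlen; norm_cast; omega))
    exact wd_comm ((h2 ζ hζ).contDiffAt (hΩ.mem_nhds hζ)) b a
  | trans h₁₂ _ ih₁₂ ih₂₃ => exact (ih₁₂ hlen).trans (ih₂₃ (h₁₂.length_eq ▸ hlen))

theorem length_flatMap_replicate (γ : Fin N → ℕ) :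
    ((List.finRange N).flatMap fun k => List.replicate (γ k) k).length = ∑ k, γ k := by
  simp [List.length_flatMap, Fin.sum_univ_def]

theorem count_flatMap_replicate (γ : Fin N → ℕ) (k : Fin N) :
    ((List.finRange N).flatMap fun i => List.replicate (γ i) i).count k = γ k := by
  rw [List.count_flatMap, ← Fin.sum_univ_def, Finset.sum_eq_single k] <;>
    simp_all [List.count_replicate]

theorem contDiffOn_wdPow (hΩ : IsOpen Ω) (γ : Fin N → ℕ) {m : ℕ}
    (hf : ContDiffOn ℝ (m + ∑ k, γ k : ℕ) f Ω) : ContDiffOn ℝ m (WdPow γ f) Ω :=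
  contDiffOn_wdList hΩ _ (by rwa [length_flatMap_replicate])

theorem wd_wdPow (hΩ : IsOpen Ω) {n : ℕ} (hf : ContDiffOn ℝ n f Ω) (γ : Fin N → ℕ) (j : Fin N)
    (hγ : ∑ k, γ k < n) : Set.EqOn (Wd j (WdPow γ f)) (WdPow (γ + Pi.single j 1) f) Ω := by
  refine wdList_perm hΩ hf (l := j :: _) (List.perm_iff_count.2 fun k => ?_) ?_
  · simp only [List.count_cons, count_flatMap_replicate, Pi.add_apply, Pi.single_apply, beq_iff_eq]
    exact congrArg (γ k + ·) (if_congr eq_comm rfl rfl)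
  · rw [List.length_cons, length_flatMap_replicate]
    exact hγ

end Iterated

section MultiIndex

def multiIndices (N ν : ℕ) : Finset (Fin N → ℕ) :=
  ((Finset.univ : Finset (Fin N → Fin (ν + 1))).filter fun α => ∑ k, (α k : ℕ) ≤ ν).image
    fun α k => (α k : ℕ)

variable {ν : ℕ}

theorem mem_multiIndices {γ : Fin N → ℕ} : γ ∈ multiIndices N ν ↔ ∑ k, γ k ≤ ν := by
  refine ⟨fun h => ?_, fun h => ?_⟩
  · obtain ⟨α, hα, rfl⟩ := Finset.mem_image.1 h
    exact (Finset.mem_filter.1 hα).2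
  · have hlt : ∀ k, γ k < ν + 1 := fun k =>
      Nat.lt_succ_of_le ((Finset.single_le_sum (fun i _ => Nat.zero_le (γ i))
        (Finset.mem_univ k)).trans h)
    exact Finset.mem_image.2 ⟨fun k => ⟨γ k, hlt k⟩, by simpa using h, rfl⟩

theorem sum_finIndices_eq_sum_multiIndices {M : Type*} [AddCommMonoid M] (F : (Fin N → ℕ) → M) :
    ∑ α ∈ (Finset.univ : Finset (Fin N → Fin (ν + 1))).filter (fun α => ∑ k, (α k : ℕ) ≤ ν),
      F (fun k => (α k : ℕ)) = ∑ γ ∈ multiIndices N ν, F γ :=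
  (Finset.sum_image fun _ _ _ _ h => funext fun k => Fin.val_injective (congrFun h k)).symm

theorem prod_factorial_add_single (γ : Fin N → ℕ) (j : Fin N) :
    ∏ k, ((γ + Pi.single j 1 : Fin N → ℕ) k).factorial = (γ j + 1) * ∏ k, (γ k).factorial := by
  rw [← Finset.mul_prod_erase _ _ (Finset.mem_univ j),
    ← Finset.mul_prod_erase _ (fun k => (γ k).factorial) (Finset.mem_univ j), ← mul_assoc]
  congr 1
  · simp [Nat.factorial_succ]
  · exact Finset.prod_congr rfl fun k hk => by simp [Finset.ne_of_mem_erase hk]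

theorem sum_multiIndices_nsmul_eq_sum_add_single (j : Fin N) {M : Type*} [AddCommMonoid M]
    (h : (Fin N → ℕ) → M) :
    ∑ γ ∈ multiIndices N ν, γ j • h γ
      = ∑ β ∈ (multiIndices N ν).filter (fun β => ∑ k, β k < ν),
          (β j + 1) • h (β + Pi.single j 1) := by
  have hsum (β : Fin N → ℕ) : ∑ k, (β + Pi.single j 1 : Fin N → ℕ) k = ∑ k, β k + 1 := by
    simp [Finset.sum_add_distrib]
  have hcancel {γ : Fin N → ℕ} (hγ : γ j ≠ 0) : γ - Pi.single j 1 + Pi.single j 1 = γ := by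
    ext k
    by_cases hk : k = j
    · subst hk
      simp only [Pi.add_apply, Pi.sub_apply, Pi.single_eq_same]
      omega
    · simp [hk]
  rw [← Finset.sum_filter_of_ne (p := fun γ => γ j ≠ 0) fun γ _ hγ h0 => hγ (by simp [h0])]
  refine Finset.sum_nbij' (· - Pi.single j 1) (· + Pi.single j 1) ?_ ?_ ?_ ?_ ?_
  · intro γ hγ
    simp only [Finset.mem_filter, mem_multiIndices] at hγ ⊢
    have := hsum (γ - Pi.single j 1)
    rw [hcancel hγ.2] at this
    omega
  · intro β hβ
    simp only [Finset.mem_filter, mem_multiIndices, hsum] at hβ ⊢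
    exact ⟨hβ.2, by simp⟩
  · exact fun γ hγ => hcancel (Finset.mem_filter.1 hγ).2
  · simp
  · intro γ hγ
    have hγj := (Finset.mem_filter.1 hγ).2
    simp only [hcancel hγj, Pi.sub_apply, Pi.single_eq_same]
    congr 1
    omega

end MultiIndex

section TaylorPolynomial

def taylorTerm (f : ℂ^N → ℂ) (z : ℂ^N) (γ : Fin N → ℕ) (w : ℂ^N) : ℂ :=
  1 / (∏ k, ((γ k).factorial : ℂ)) * WdPow γ f w * taylorMonomial z γ w

theorem truncTaylor_eq_sum (ν : ℕ) (ρ : ℂ^N → ℝ) (ζ z : ℂ^N) :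
    truncTaylor ν ρ ζ z = -∑ γ ∈ multiIndices N ν, taylorTerm (fun x => (ρ x : ℂ)) z γ ζ :=
  congrArg Neg.neg (sum_finIndices_eq_sum_multiIndices fun γ => taylorTerm _ z γ ζ)

variable {Ω : Set ℂ^N} {f : ℂ^N → ℂ} {n : ℕ} {ζ : ℂ^N}

theorem differentiableAt_wdPow (hΩ : IsOpen Ω) (hf : ContDiffOn ℝ n f Ω) {γ : Fin N → ℕ}
    (hγ : ∑ k, γ k < n) (hζ : ζ ∈ Ω) : DifferentiableAt ℝ (WdPow γ f) ζ :=
  ((contDiffOn_wdPow hΩ γ (m := 1) (hf.of_le (by norm_cast; omega)) ζ hζ).contDiffAt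
    (hΩ.mem_nhds hζ)).differentiableAt one_ne_zero

theorem differentiableAt_taylorTerm (hΩ : IsOpen Ω) (hf : ContDiffOn ℝ n f Ω) (z : ℂ^N)
    {γ : Fin N → ℕ} (hγ : ∑ k, γ k < n) (hζ : ζ ∈ Ω) :
    DifferentiableAt ℝ (taylorTerm f z γ) ζ :=
  ((differentiableAt_wdPow hΩ hf hγ hζ).const_mul _).mul (differentiableAt_taylorMonomial z γ ζ)

theorem wd_taylorTerm (hΩ : IsOpen Ω) (hf : ContDiffOn ℝ n f Ω) (z : ℂ^N) {γ : Fin N → ℕ}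
    (hγ : ∑ k, γ k < n) (j : Fin N) (hζ : ζ ∈ Ω) :
    Wd j (taylorTerm f z γ) ζ
      = 1 / (∏ k, ((γ k).factorial : ℂ)) * WdPow (γ + Pi.single j 1) f ζ * taylorMonomial z γ ζ
        - γ j • (1 / (∏ k, ((γ k).factorial : ℂ)) * WdPow γ f ζ
          * taylorMonomial z (γ - Pi.single j 1) ζ) := by
  have hD := differentiableAt_wdPow hΩ hf hγ hζ
  unfold taylorTerm
  rw [wd_mul (hD.const_mul _) (differentiableAt_taylorMonomial z γ ζ), wd_const_mul _ hD,
    wd_wdPow hΩ hf γ j hγ hζ, wd_taylorMonomial, nsmul_eq_mul]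
  ring

theorem wd_truncTaylor (hΩ : IsOpen Ω) {ν : ℕ} {ρ : ℂ^N → ℝ}
    (hρ : ContDiffOn ℝ (ν + 1 : ℕ) (fun x => (ρ x : ℂ)) Ω) (j : Fin N) (z : ℂ^N) (hζ : ζ ∈ Ω) :
    Wd j (fun w => truncTaylor ν ρ w z) ζ
      = -∑ γ ∈ (multiIndices N ν).filter (fun γ => ∑ k, γ k = ν),
          1 / (∏ k, ((γ k).factorial : ℂ)) * WdPow (γ + Pi.single j 1) (fun x => (ρ x : ℂ)) ζ
            * taylorMonomial z γ ζ := by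
  set f : ℂ^N → ℂ := fun x => (ρ x : ℂ)
  set S := multiIndices N ν
  have hlt : ∀ γ ∈ S, ∑ k, γ k < ν + 1 := fun γ hγ => Nat.lt_succ_of_le (mem_multiIndices.1 hγ)
  have hshift (β : Fin N → ℕ) :
      (β j + 1) • (1 / (∏ k, (((β + Pi.single j 1 : Fin N → ℕ) k).factorial : ℂ))
        * WdPow (β + Pi.single j 1) f ζ * taylorMonomial z (β + Pi.single j 1 - Pi.single j 1) ζ)
      = 1 / (∏ k, ((β k).factorial : ℂ)) * WdPow (β + Pi.single j 1) f ζ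
        * taylorMonomial z β ζ := by
    rw [add_tsub_cancel_right, ← Nat.cast_prod, prod_factorial_add_single, nsmul_eq_mul]
    push_cast
    field_simp
  simp_rw [truncTaylor_eq_sum]
  rw [wd_neg, wd_sum _ fun γ hγ => differentiableAt_taylorTerm hΩ hρ z (hlt γ hγ) hζ,
    Finset.sum_congr rfl fun γ hγ => wd_taylorTerm hΩ hρ z (hlt γ hγ) j hζ,
    Finset.sum_sub_distrib, sum_multiIndices_nsmul_eq_sum_add_single j,
    Finset.sum_congr rfl fun β _ => hshift β,
    ← Finset.sum_filter_add_sum_filter_not S (fun γ => ∑ k, γ k < ν), add_sub_cancel_left]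
  congr 2
  exact Finset.filter_congr fun γ hγ => by have := mem_multiIndices.1 hγ; omega

end TaylorPolynomial

theorem norm_sum_mul_taylorMonomial_le {ν : ℕ} (s : Finset (Fin N → ℕ))
    (hs : ∀ γ ∈ s, ∑ k, γ k = ν) (a : (Fin N → ℕ) → ℂ) (z ζ : ℂ^N) :
    ‖∑ γ ∈ s, a γ * taylorMonomial z γ ζ‖ ≤ (∑ γ ∈ s, ‖a γ‖) * ‖ζ - z‖ ^ ν := by
  rw [Finset.sum_mul]
  refine (norm_sum_le _ _).trans (Finset.sum_le_sum fun γ hγ => ?_)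
  rw [norm_mul, ← hs γ hγ]
  exact mul_le_mul_of_nonneg_left (norm_taylorMonomial_le z γ ζ) (norm_nonneg _)

theorem stmt5_general (N : ℕ) (Ω : Set (EuclideanSpace ℂ (Fin N))) (hΩo : IsOpen Ω)
    (ν : ℕ) (ρ : EuclideanSpace ℂ (Fin N) → ℝ)
    (hρ : ContDiffOn ℝ (ν + 2 : ℕ) ρ Ω) (j : Fin N)
    (K : Set (EuclideanSpace ℂ (Fin N))) (hK : IsCompact K) (hKΩ : K ⊆ Ω) :
    ∃ C > 0, ∀ ζ ∈ K, ∀ z ∈ K,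
      ‖Wd j (fun w => truncTaylor ν ρ w z) ζ‖ ≤ C * ‖ζ - z‖ ^ ν := by
  have hρ' : ContDiffOn ℝ (ν + 1 : ℕ) (fun x => (ρ x : ℂ)) Ω :=
    ofRealCLM.contDiff.comp_contDiffOn (hρ.of_le (by norm_cast; omega))
  set top := (multiIndices N ν).filter (fun γ => ∑ k, γ k = ν)
  set a : (Fin N → ℕ) → ℂ^N → ℂ := fun γ ζ =>
    1 / (∏ k, ((γ k).factorial : ℂ)) * WdPow (γ + Pi.single j 1) (fun x => (ρ x : ℂ)) ζ
  have ha : ContinuousOn (fun ζ => ∑ γ ∈ top, ‖a γ ζ‖) Ω := by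
    refine continuousOn_finsetSum _ fun γ hγ => (continuousOn_const.mul ?_).norm
    refine (contDiffOn_wdPow hΩo _ (m := 0) (hρ'.of_le ?_)).continuousOn
    have := (Finset.mem_filter.1 hγ).2
    simp [Finset.sum_add_distrib, this]
  obtain ⟨C, hC⟩ := hK.exists_bound_of_continuousOn (ha.mono hKΩ)
  refine ⟨max C 1, by positivity, fun ζ hζ z _ => ?_⟩
  rw [wd_truncTaylor hΩo hρ' j z (hKΩ hζ), norm_neg]
  refine (norm_sum_mul_taylorMonomial_le top (fun γ hγ => (Finset.mem_filter.1 hγ).2)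
    (a · ζ) z ζ).trans (mul_le_mul_of_nonneg_right ?_ (by positivity))
  exact (le_abs_self _).trans ((hC ζ hζ).trans (le_max_left _ _))

/-- For `ρ` of class `C^{ν+2}` on an open convex set `Ω ⊂ ℂ^N`, the Wirtinger
`ζ`-derivative of the truncated Taylor series `v_ν` satisfies
`∂v_ν/∂ζ_j(ζ,z) = O(|ζ-z|^ν)` locally uniformly on `Ω × Ω`. -/
theorem stmt5 (N : ℕ) (Ω : Set (EuclideanSpace ℂ (Fin N))) (hΩo : IsOpen Ω)
    (hΩc : Convex ℝ Ω) (ν : ℕ) (ρ : EuclideanSpace ℂ (Fin N) → ℝ)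
    (hρ : ContDiffOn ℝ (ν + 2 : ℕ) ρ Ω) (j : Fin N)
    (K : Set (EuclideanSpace ℂ (Fin N))) (hK : IsCompact K) (hKΩ : K ⊆ Ω) :
    ∃ C > 0, ∀ ζ ∈ K, ∀ z ∈ K,
      ‖Wd j (fun w => truncTaylor ν ρ w z) ζ‖ ≤ C * ‖ζ - z‖ ^ ν :=
  stmt5_general N Ω hΩo ν ρ hρ j K hK hKΩ

end
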